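/- arXiv:2012.01499 — 9 statements merged into one kernel-verified Lean document; each statement's English description precedes it below -/
import Mathlib

section
/- For any θ ∈ [0,1], θ ≤ θ_v if and only if Σ_{i∈Top([N], v, θ)} (r_i − θ) v_i ≥ θ, where θ_v is the maximum of R(S, v) over all S ⊆ [N] with |S| ≤ K. -/
/-- The expected reward `R(S, v)` of an assortment `S`. -/
noncomputable def Rew {N : ℕ} (r v : Fin N → ℝ) (S : Finset (Fin N)) : ℝ :=
  (∑ i ∈ S, r i * v i) / (1 + ∑ i ∈ S, v i)

/-- `θ_v`: the optimal expected reward over assortments of size at most `K`. -/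
noncomputable def thetaOpt (N K : ℕ) (r v : Fin N → ℝ) : ℝ :=
  ((Finset.univ : Finset (Fin N)).powerset.filter (fun S => S.card ≤ K)).sup'
    ⟨∅, by simp⟩ (Rew r v)

/- `Top([N], w, θ)`: take the `min {K, N}` items `i` with the largest values
`(r i − θ) * w i` (ties broken in favor of smaller index), then remove all items
with `r i − θ ≤ 0`. -/
open Classical in
noncomputable def TopSet (N K : ℕ) (r w : Fin N → ℝ) (θ : ℝ) : Finset (Fin N) :=
  ((List.insertionSort (fun i j =>
      (r j - θ) * w j < (r i - θ) * w i ∨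
      ((r i - θ) * w i = (r j - θ) * w j ∧ i ≤ j)) (List.finRange N)).take
    (min K N)).toFinset.filter (fun i => θ < r i)

/-!
Clearing the positive denominator `1 + ∑ v`, `θ ≤ R(S, v)` becomes `θ ≤ ∑_{i ∈ S} (r i - θ) v i`,
so `θ ≤ θ_v` iff some `S` with `|S| ≤ K` has score sum at least `θ`. The top set attains the largest
score sum: it is the sum of the positive parts of the scores over the first `min K N` items in
decreasing score order, and an exchange argument shows that no set of at most `K` items does better.
-/

section TopSum

variable {ι M : Type*} [DecidableEq ι] [AddCommMonoid M] [LinearOrder M] [IsOrderedAddMonoid M]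

/-- Exchange argument: every element of `S \ T` is dominated by every element of the at least
as large set `T \ S`. -/
theorem Finset.sum_le_sum_of_card_le_of_forall_le {f : ι → M} {S T : Finset ι}
    (hcard : S.card ≤ T.card) (htop : ∀ i ∉ T, ∀ j ∈ T, f i ≤ f j) (hf : ∀ j ∈ T, 0 ≤ f j) :
    ∑ i ∈ S, f i ≤ ∑ i ∈ T, f i := by
  have hdiff : (S \ T).card ≤ (T \ S).card := by
    have hS := Finset.card_sdiff_add_card_inter S T
    have hT := Finset.card_sdiff_add_card_inter T S
    rw [Finset.inter_comm] at hT
    omega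
  have hexchange : ∑ i ∈ S \ T, f i ≤ ∑ i ∈ T \ S, f i := by
    rcases (T \ S).eq_empty_or_nonempty with hempty | hne
    · rw [hempty, Finset.card_empty, Nat.le_zero, Finset.card_eq_zero] at hdiff
      simp [hdiff, hempty]
    set c := (T \ S).inf' hne f
    have hc : 0 ≤ c := Finset.le_inf' hne f fun j hj => hf j (Finset.mem_sdiff.1 hj).1
    calc ∑ i ∈ S \ T, f i
        ≤ (S \ T).card • c := Finset.sum_le_card_nsmul _ _ _ fun i hi =>
          Finset.le_inf' hne f fun j hj => htop i (Finset.mem_sdiff.1 hi).2 j (Finset.mem_sdiff.1 hj).1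
      _ ≤ (T \ S).card • c := nsmul_le_nsmul_left hc hdiff
      _ ≤ ∑ i ∈ T \ S, f i := Finset.card_nsmul_le_sum _ _ _ fun j hj => Finset.inf'_le f hj
  rw [← Finset.sum_inter_add_sum_sdiff S T, ← Finset.sum_inter_add_sum_sdiff T S,
    Finset.inter_comm T S]
  exact add_le_add_right hexchange _

end TopSum

theorem List.le_of_mem_toFinset_take_of_notMem {ι α : Type*} [DecidableEq ι] [Preorder α]
    {g : ι → α} {l : List ι} (hl : l.Pairwise fun i j => g j ≤ g i) (k : ℕ) {i j : ι}
    (hi : i ∈ l) (hiT : i ∉ (l.take k).toFinset) (hjT : j ∈ (l.take k).toFinset) :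
    g i ≤ g j := by
  rw [← List.take_append_drop k l, List.pairwise_append] at hl
  rw [← List.take_append_drop k l, List.mem_append] at hi
  rw [List.mem_toFinset] at hiT hjT
  exact hl.2.2 j hjT i (hi.resolve_left hiT)

theorem List.pairwise_insertionSort_key {α β : Type*} [LinearOrder β] (key : α → β)
    (l : List α) :
    (l.insertionSort fun a b => key a ≤ key b).Pairwise fun a b => key a ≤ key b :=
  haveI : Std.Total fun a b : α => key a ≤ key b := ⟨fun a b => le_total (key a) (key b)⟩
  haveI : IsTrans α fun a b => key a ≤ key b := ⟨fun _ _ _ => le_trans⟩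
  List.pairwise_insertionSort _ l

section TopSet

variable {N K : ℕ} {r w : Fin N → ℝ} {θ : ℝ}

/-- `TopSet` sorts by the lexicographic order on this key: decreasing score, then increasing index. -/
def topKey (r w : Fin N → ℝ) (θ : ℝ) (i : Fin N) : Lex (ℝᵒᵈ × Fin N) :=
  toLex (OrderDual.toDual ((r i - θ) * w i), i)

theorem topSet_eq_filter_take :
    TopSet N K r w θ = (((List.finRange N).insertionSort fun i j =>
      topKey r w θ i ≤ topKey r w θ j).take (min K N)).toFinset.filter (θ < r ·) := by
  unfold TopSet
  congr! 4
  ext i j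
  exact (Prod.Lex.le_iff (x := topKey r w θ i) (y := topKey r w θ j)).symm

theorem card_topSet_le : (TopSet N K r w θ).card ≤ K := by
  unfold TopSet
  calc _ ≤ _ := Finset.card_filter_le _ _
    _ ≤ _ := List.toFinset_card_le _
    _ ≤ K := by rw [List.length_take]; omega

theorem sum_le_sum_topSet (hw : ∀ i, 0 ≤ w i) {S : Finset (Fin N)} (hS : S.card ≤ K) :
    ∑ i ∈ S, (r i - θ) * w i ≤ ∑ i ∈ TopSet N K r w θ, (r i - θ) * w i := by
  set g : Fin N → ℝ := fun i => (r i - θ) * w i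
  set L := (List.finRange N).insertionSort fun i j => topKey r w θ i ≤ topKey r w θ j
  have hperm : L.Perm (List.finRange N) := List.perm_insertionSort _ _
  have hsorted : L.Pairwise fun i j => g j ≤ g i :=
    (List.pairwise_insertionSort_key (topKey r w θ) _).imp fun h => Prod.Lex.monotone_fst _ _ h
  set T := (L.take (min K N)).toFinset
  have hcard : S.card ≤ T.card := by
    have hS' : S.card ≤ N := by simpa using Finset.card_le_univ S
    rw [List.toFinset_card_of_nodup ((hperm.nodup_iff.2 (List.nodup_finRange N)).sublist
      (List.take_sublist _ _)), List.length_take, hperm.length_eq, List.length_finRange]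
    omega
  have hfilter : ∑ i ∈ T.filter (θ < r ·), g i = ∑ i ∈ T, max (g i) 0 := by
    rw [Finset.sum_filter]
    refine Finset.sum_congr rfl fun i _ => ?_
    split_ifs with hi
    · exact (max_eq_left (mul_nonneg (sub_nonneg.2 hi.le) (hw i))).symm
    · exact (max_eq_right (mul_nonpos_of_nonpos_of_nonneg (by linarith) (hw i))).symm
  rw [topSet_eq_filter_take, hfilter]
  calc ∑ i ∈ S, g i ≤ ∑ i ∈ S, max (g i) 0 := Finset.sum_le_sum fun i _ => le_max_left _ _
    _ ≤ ∑ i ∈ T, max (g i) 0 :=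
      Finset.sum_le_sum_of_card_le_of_forall_le hcard
        (fun i hi j hj => max_le_max_right 0 <| List.le_of_mem_toFinset_take_of_notMem hsorted _
          (hperm.mem_iff.2 (List.mem_finRange i)) hi hj)
        fun _ _ => le_max_right _ _

end TopSet

theorem le_rew_iff {N : ℕ} {r v : Fin N → ℝ} (hv : ∀ i, 0 ≤ v i) (θ : ℝ) (S : Finset (Fin N)) :
    θ ≤ Rew r v S ↔ θ ≤ ∑ i ∈ S, (r i - θ) * v i := by
  have hden : 0 < 1 + ∑ i ∈ S, v i := by
    linarith [Finset.sum_nonneg fun i (_ : i ∈ S) => hv i]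
  have hsum : ∑ i ∈ S, (r i - θ) * v i = ∑ i ∈ S, r i * v i - θ * ∑ i ∈ S, v i := by
    rw [Finset.mul_sum, ← Finset.sum_sub_distrib]
    exact Finset.sum_congr rfl fun i _ => by ring
  rw [Rew, le_div_iff₀ hden, hsum]
  constructor <;> intro h <;> linarith

theorem le_thetaOpt_iff {N K : ℕ} {r v : Fin N → ℝ} {θ : ℝ} :
    θ ≤ thetaOpt N K r v ↔ ∃ S : Finset (Fin N), S.card ≤ K ∧ θ ≤ Rew r v S :=
  (Finset.le_sup'_iff _).trans (by simp)

theorem stmt2_general (N K : ℕ) (r v : Fin N → ℝ)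
    (hv : ∀ i, 0 ≤ v i ∧ v i ≤ 1)
    (θ : ℝ) :
    θ ≤ thetaOpt N K r v ↔ ∑ i ∈ TopSet N K r v θ, (r i - θ) * v i ≥ θ := by
  have hv₀ : ∀ i, 0 ≤ v i := fun i => (hv i).1
  simp only [le_thetaOpt_iff, le_rew_iff hv₀, ge_iff_le]
  constructor
  · rintro ⟨S, hS, hθS⟩
    exact hθS.trans (sum_le_sum_topSet hv₀ hS)
  · exact fun h => ⟨_, card_topSet_le, h⟩

/-- For any `θ ∈ [0,1]`, `θ ≤ θ_v` iff `Σ_{i∈Top([N],v,θ)} (r_i − θ) v_i ≥ θ`. -/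
theorem stmt2 (N K : ℕ) (hK : 1 ≤ K) (hKN : K ≤ N) (r v : Fin N → ℝ)
    (hr : ∀ i, 0 < r i ∧ r i ≤ 1) (hv : ∀ i, 0 ≤ v i ∧ v i ≤ 1)
    (θ : ℝ) (hθ : 0 ≤ θ ∧ θ ≤ 1) :
    θ ≤ thetaOpt N K r v ↔ ∑ i ∈ TopSet N K r v θ, (r i - θ) * v i ≥ θ :=
  stmt2_general N K r v hv θ
end

section
/- If v, w ∈ [0,1]^N satisfy v ≼ w (i.e., v_i ≤ w_i for all i), then for every assortment S ⊆ [N] it holds that R(S, w) − R(S, v) ≤ Σ_{i∈S} (w_i − v_i). -/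
open Finset

/-
Write `a = Σ v_i`, `b = Σ w_i`, `C = Σ r_i v_i`, `A = Σ r_i w_i`. Since `r_i ≤ 1`, `A - C ≤ b - a`, and
since `a ≤ b` and `C ≥ 0`,
`A/(1+b) - C/(1+a) ≤ (A - C)/(1+b) ≤ (b - a)/(1+b) ≤ b - a`.
-/

lemma div_one_add_sub_div_one_add_le {A C a b : ℝ} (hC : 0 ≤ C) (ha : 0 ≤ a) (hab : a ≤ b)
    (h : A - C ≤ b - a) : A / (1 + b) - C / (1 + a) ≤ b - a := by
  have ha' : 0 < 1 + a := by linarith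
  have hb : 1 ≤ 1 + b := by linarith
  calc A / (1 + b) - C / (1 + a)
      ≤ A / (1 + b) - C / (1 + b) := by gcongr
    _ = (A - C) / (1 + b) := (sub_div A C (1 + b)).symm
    _ ≤ (b - a) / (1 + b) := by gcongr
    _ ≤ b - a := div_le_self (sub_nonneg.2 hab) hb

lemma sum_mul_sub_sum_mul_le_sum_sub_sum {ι : Type*} (s : Finset ι) {r v w : ι → ℝ}
    (hr : ∀ i ∈ s, r i ≤ 1) (hvw : ∀ i ∈ s, v i ≤ w i) :
    ∑ i ∈ s, r i * w i - ∑ i ∈ s, r i * v i ≤ ∑ i ∈ s, w i - ∑ i ∈ s, v i := by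
  rw [← sum_sub_distrib, ← sum_sub_distrib]
  refine sum_le_sum fun i hi => ?_
  rw [← mul_sub]
  exact mul_le_of_le_one_left (sub_nonneg.2 (hvw i hi)) (hr i hi)

theorem stmt5_general (N : ℕ) (r v w : Fin N → ℝ)
    (hr : ∀ i, 0 < r i ∧ r i ≤ 1) (hv : ∀ i, 0 ≤ v i ∧ v i ≤ 1)
    (hvw : ∀ i, v i ≤ w i)
    (S : Finset (Fin N)) :
    Rew r w S - Rew r v S ≤ ∑ i ∈ S, (w i - v i) := by
  rw [sum_sub_distrib]
  apply div_one_add_sub_div_one_add_le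
  · exact sum_nonneg fun i _ => mul_nonneg (hr i).1.le (hv i).1
  · exact sum_nonneg fun i _ => (hv i).1
  · exact sum_le_sum fun i _ => hvw i
  · exact sum_mul_sub_sum_mul_le_sum_sub_sum S (fun i _ => (hr i).2) (fun i _ => hvw i)

/-- If `v ≼ w` componentwise, then `R(S, w) − R(S, v) ≤ Σ_{i∈S} (w_i − v_i)`. -/
theorem stmt5 (N : ℕ) (r v w : Fin N → ℝ)
    (hr : ∀ i, 0 < r i ∧ r i ≤ 1) (hv : ∀ i, 0 ≤ v i ∧ v i ≤ 1)
    (hw : ∀ i, 0 ≤ w i ∧ w i ≤ 1) (hvw : ∀ i, v i ≤ w i)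
    (S : Finset (Fin N)) :
    Rew r w S - Rew r v S ≤ ∑ i ∈ S, (w i - v i) :=
  stmt5_general N r v w hr hv hvw S
end

section
/- Let p ∈ [0,1], t ∈ [0,1], and let X_1, …, X_n be i.i.d. random variables with the geometric distribution on {0,1,2,…} with success probability 1/(1+p), i.e., Pr[X = k] = (p/(1+p))^k · (1/(1+p)) for each integer k ≥ 0 (so E[X_i] = p). Then Pr[ |(1/n) Σ_{i=1}^n (X_i − p)| ≥ t ] ≤ 2·exp(−n t² / 8). -/
/-!
The moment generating function of `Geo(1/(1+p))` is `c ↦ (1 + p - p eᶜ)⁻¹`, and third-order Taylor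
estimates of `exp` show `(1 + p - p eᶜ)⁻¹ ≤ exp (c p + 2 c²)` for `p ∈ [0, 1]` and `|c| ≤ 1/4`: on that
range of `c` the centred variables are sub-Gaussian with variance proxy `4`. The Chernoff bound for
the sum, applied to both tails at `c = ± t/4`, bounds each tail by
`exp (n (2 (t/4)² - t²/4)) = exp (-n t²/8)`.
-/

open MeasureTheory ProbabilityTheory Real

section ExpBounds

theorem abs_exp_sub_quadratic_le {x : ℝ} (hx : |x| ≤ 1) :
    |exp x - (1 + x + x ^ 2 / 2)| ≤ |x| ^ 3 * (2 / 9) := by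
  have h := Real.exp_bound hx (n := 3) (by norm_num)
  simp only [Finset.sum_range_succ, Finset.sum_range_zero, Nat.factorial] at h
  convert h using 2 <;> norm_num

theorem exp_sub_one_le_of_abs_le {x : ℝ} (hx : |x| ≤ 1 / 4) :
    exp x - 1 ≤ x + 5 / 9 * x ^ 2 := by
  have h := (abs_le.mp (abs_exp_sub_quadratic_le (hx.trans (by norm_num)))).2
  have hcube : |x| ^ 3 ≤ x ^ 2 / 4 := by
    rw [pow_succ, sq_abs]
    exact mul_le_mul_of_nonneg_left hx (sq_nonneg _) |>.trans_eq (by ring)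
  linarith

theorem quadratic_le_exp_of_abs_le {y : ℝ} (hy : |y| ≤ 3 / 8) :
    1 + y + 5 / 12 * y ^ 2 ≤ exp y := by
  have h := (abs_le.mp (abs_exp_sub_quadratic_le (hy.trans (by norm_num)))).1
  have hcube : |y| ^ 3 ≤ 3 / 8 * y ^ 2 := by
    rw [pow_succ, sq_abs]
    exact mul_le_mul_of_nonneg_left hy (sq_nonneg _) |>.trans_eq (by ring)
  linarith

theorem one_le_mul_exp_of_abs_le_quarter {p c : ℝ} (hp0 : 0 ≤ p) (hp1 : p ≤ 1) (hc : |c| ≤ 1 / 4) :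
    1 ≤ (1 + p - p * exp c) * exp (c * p + 2 * c ^ 2) := by
  obtain ⟨hc₁, hc₂⟩ := abs_le.mp hc
  set y := c * p + 2 * c ^ 2
  have hy_abs : |y| ≤ 3 / 8 := abs_le.mpr ⟨by nlinarith, by nlinarith⟩
  have hw : 7 / 10 ≤ 1 - p * c - 5 / 9 * p * c ^ 2 := by nlinarith [mul_nonneg hp0 (sq_nonneg c)]
  -- `(1 - p c - 5/9 p c²) (1 + y + 5/12 y²) - 1` equals `c²` times this polynomial
  have hG : 0 ≤ 2 - p ^ 2 - 5 / 9 * p - 2 * p * c - 5 / 9 * p ^ 2 * c - 10 / 9 * p * c ^ 2 +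
      5 / 12 * (p + 2 * c) ^ 2 * (1 - p * c - 5 / 9 * p * c ^ 2) := by
    nlinarith [mul_le_mul_of_nonneg_left hw (sq_nonneg (p + 2 * c)),
      mul_nonneg hp0 (sub_nonneg.2 hp1), mul_nonneg hp0 (sq_nonneg c),
      mul_nonneg (mul_nonneg hp0 hp0) (sub_nonneg.2 hc₂),
      mul_nonneg (mul_nonneg hp0 hp0) (neg_le_iff_add_nonneg.1 hc₁),
      mul_nonneg hp0 (sub_nonneg.2 hc₂), mul_nonneg hp0 (neg_le_iff_add_nonneg.1 hc₁)]
  have hfac : 1 - p * c - 5 / 9 * p * c ^ 2 ≤ 1 + p - p * exp c := by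
    nlinarith [mul_le_mul_of_nonneg_left (exp_sub_one_le_of_abs_le hc) hp0]
  calc (1 : ℝ) ≤ (1 - p * c - 5 / 9 * p * c ^ 2) * (1 + y + 5 / 12 * y ^ 2) := by
        nlinarith [mul_nonneg (sq_nonneg c) hG]
    _ ≤ (1 + p - p * exp c) * exp y := by
        refine mul_le_mul hfac (quadratic_le_exp_of_abs_le hy_abs) ?_ (by linarith)
        nlinarith [sq_nonneg y]

theorem mul_exp_sub_one_lt_one {p c : ℝ} (hp0 : 0 ≤ p) (hp1 : p ≤ 1) (hc : |c| ≤ 1 / 4) :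
    p * (exp c - 1) < 1 := by
  obtain ⟨hc₁, hc₂⟩ := abs_le.mp hc
  nlinarith [exp_sub_one_le_of_abs_le hc]

end ExpBounds

section Geometric

variable {Ω : Type*} [MeasurableSpace Ω] {μ : Measure Ω} {X : Ω → ℕ} {p c : ℝ}

theorem lintegral_exp_mul_geometric (hX : Measurable X)
    (hd : ∀ k, μ {ω | X ω = k} = ENNReal.ofReal ((p / (1 + p)) ^ k * (1 / (1 + p))))
    (hp : 0 ≤ p) (hc : p * (exp c - 1) < 1) :
    ∫⁻ ω, ENNReal.ofReal (exp (c * X ω)) ∂μ = ENNReal.ofReal (1 + p - p * exp c)⁻¹ := by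
  obtain ⟨r, hr⟩ : ∃ r, r = p / (1 + p) * exp c := ⟨_, rfl⟩
  have h1r : 1 - r = (1 + p - p * exp c) / (1 + p) := by rw [hr]; field_simp
  have hr0 : 0 ≤ r := by rw [hr]; positivity
  have hr1 : r < 1 := by
    have : 0 < 1 - r := by rw [h1r]; apply div_pos <;> linarith
    linarith
  have hterm : ∀ k : ℕ, exp (c * k) * ((p / (1 + p)) ^ k * (1 / (1 + p))) = r ^ k * (1 / (1 + p)) := by
    intro k
    rw [hr, mul_pow, mul_comm c, exp_nat_mul]
    ring
  have hsum := (hasSum_geometric_of_lt_one hr0 hr1).mul_right (1 / (1 + p))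
  rw [h1r, inv_div, div_mul_div_comm, mul_one, mul_comm, div_mul_cancel_left₀ (by linarith)]
    at hsum
  rw [← lintegral_map (f := fun k : ℕ => ENNReal.ofReal (exp (c * k))) measurable_from_top hX,
    lintegral_countable', ← hsum.tsum_eq, ENNReal.ofReal_tsum_of_nonneg (fun k => by positivity)
    hsum.summable]
  refine tsum_congr fun k => ?_
  rw [Measure.map_apply hX (measurableSet_singleton k)]
  simp only [Set.preimage, Set.mem_singleton_iff]
  rw [hd, ← ENNReal.ofReal_mul (exp_pos _).le, hterm]

theorem integrable_exp_mul_geometric (hX : Measurable X)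
    (hd : ∀ k, μ {ω | X ω = k} = ENNReal.ofReal ((p / (1 + p)) ^ k * (1 / (1 + p))))
    (hp : 0 ≤ p) (hc : p * (exp c - 1) < 1) :
    Integrable (fun ω => exp (c * X ω)) μ := by
  refine ⟨by fun_prop, ?_⟩
  rw [hasFiniteIntegral_iff_ofReal (ae_of_all _ fun ω => (exp_pos _).le),
    lintegral_exp_mul_geometric hX hd hp hc]
  exact ENNReal.ofReal_lt_top

theorem mgf_geometric (hX : Measurable X)
    (hd : ∀ k, μ {ω | X ω = k} = ENNReal.ofReal ((p / (1 + p)) ^ k * (1 / (1 + p))))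
    (hp : 0 ≤ p) (hc : p * (exp c - 1) < 1) :
    mgf (fun ω => (X ω : ℝ)) μ c = (1 + p - p * exp c)⁻¹ := by
  rw [mgf, integral_eq_lintegral_of_nonneg_ae (ae_of_all _ fun ω => (exp_pos _).le) (by fun_prop),
    lintegral_exp_mul_geometric hX hd hp hc, ENNReal.toReal_ofReal (inv_nonneg.2 (by linarith))]

theorem mgf_geometric_le (hX : Measurable X)
    (hd : ∀ k, μ {ω | X ω = k} = ENNReal.ofReal ((p / (1 + p)) ^ k * (1 / (1 + p))))
    (hp0 : 0 ≤ p) (hp1 : p ≤ 1) (hc : |c| ≤ 1 / 4) :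
    mgf (fun ω => (X ω : ℝ)) μ c ≤ exp (c * p + 2 * c ^ 2) := by
  have hc' := mul_exp_sub_one_lt_one hp0 hp1 hc
  rw [mgf_geometric hX hd hp0 hc', inv_le_iff_one_le_mul₀' (by linarith)]
  exact one_le_mul_exp_of_abs_le_quarter hp0 hp1 hc

end Geometric

section Chernoff

variable {Ω : Type*} [MeasurableSpace Ω] {μ : Measure Ω} [IsFiniteMeasure μ]
  {ι : Type*} [Fintype ι] {Y : ι → Ω → ℝ} {m v s : ℝ}

theorem measure_sum_sub_ge_le (h_indep : iIndepFun Y μ) (h_meas : ∀ i, Measurable (Y i))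
    (hs : 0 ≤ s) (h_int : ∀ i, Integrable (fun ω => exp (s * Y i ω)) μ)
    (h_mgf : ∀ i, mgf (Y i) μ s ≤ exp (s * m + v * s ^ 2)) (ε : ℝ) :
    μ.real {ω | Fintype.card ι * ε ≤ ∑ i, (Y i ω - m)} ≤
      exp (Fintype.card ι * (v * s ^ 2 - s * ε)) := by
  set n : ℝ := (Fintype.card ι : ℝ)
  have hset : {ω | n * ε ≤ ∑ i, (Y i ω - m)} = {ω | n * m + n * ε ≤ (∑ i, Y i) ω} := by
    ext ω
    simp only [Set.mem_ofPred_eq, Finset.sum_sub_distrib, Finset.sum_const, Finset.card_univ,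
      nsmul_eq_mul, Finset.sum_apply]
    constructor <;> intro h <;> linarith
  have h_mgf_sum : mgf (∑ i, Y i) μ s ≤ exp (n * (s * m + v * s ^ 2)) := by
    calc mgf (∑ i, Y i) μ s = ∏ i, mgf (Y i) μ s := h_indep.mgf_sum h_meas _
      _ ≤ ∏ _i : ι, exp (s * m + v * s ^ 2) :=
        Finset.prod_le_prod (fun i _ => mgf_nonneg) fun i _ => h_mgf i
      _ = exp (n * (s * m + v * s ^ 2)) := by
        rw [Finset.prod_const, Finset.card_univ, ← exp_nat_mul]
  rw [hset]
  calc μ.real {ω | n * m + n * ε ≤ (∑ i, Y i) ω}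
      ≤ exp (-s * (n * m + n * ε)) * mgf (∑ i, Y i) μ s :=
        measure_ge_le_exp_mul_mgf _ hs (h_indep.integrable_exp_mul_sum h_meas fun i _ => h_int i)
    _ ≤ exp (-s * (n * m + n * ε)) * exp (n * (s * m + v * s ^ 2)) := by gcongr
    _ = exp (n * (v * s ^ 2 - s * ε)) := by rw [← exp_add]; ring_nf

theorem measure_abs_sum_sub_ge_le (h_indep : iIndepFun Y μ) (h_meas : ∀ i, Measurable (Y i))
    (hs : 0 ≤ s) (h_int : ∀ i c, |c| ≤ s → Integrable (fun ω => exp (c * Y i ω)) μ)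
    (h_mgf : ∀ i c, |c| ≤ s → mgf (Y i) μ c ≤ exp (c * m + v * c ^ 2)) (ε : ℝ) :
    μ.real {ω | Fintype.card ι * ε ≤ |∑ i, (Y i ω - m)|} ≤
      2 * exp (Fintype.card ι * (v * s ^ 2 - s * ε)) := by
  have hs_abs : |s| ≤ s := (abs_of_nonneg hs).le
  have hns_abs : |-s| ≤ s := (abs_neg s ▸ hs_abs)
  have upper := measure_sum_sub_ge_le h_indep h_meas hs (fun i => h_int i s hs_abs)
    (fun i => h_mgf i s hs_abs) ε
  -- the lower tail of `Y` is the upper tail of `-Y`, whose mean is `-m`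
  have lower := measure_sum_sub_ge_le (Y := fun i => -Y i) (m := -m) (v := v)
    (h_indep.comp (fun _ => Neg.neg) fun _ => measurable_neg) (fun i => (h_meas i).neg) hs
    (fun i => by simpa only [Pi.neg_apply, mul_neg, neg_mul] using h_int i (-s) hns_abs)
    (fun i => by simpa only [mgf_neg, mul_neg, neg_mul, neg_sq, neg_neg] using h_mgf i (-s) hns_abs)
    ε
  have hsub : {ω | Fintype.card ι * ε ≤ |∑ i, (Y i ω - m)|} ⊆
      {ω | Fintype.card ι * ε ≤ ∑ i, (Y i ω - m)} ∪
        {ω | Fintype.card ι * ε ≤ ∑ i, ((-Y i) ω - -m)} := by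
    intro ω hω
    have hneg : ∑ i, ((-Y i) ω - -m) = -∑ i, (Y i ω - m) := by
      rw [← Finset.sum_neg_distrib]
      exact Finset.sum_congr rfl fun i _ => by rw [Pi.neg_apply]; ring
    simp only [Set.mem_union, Set.mem_ofPred_eq, hneg]
    exact le_abs.mp hω
  calc _ ≤ _ := measureReal_mono hsub
    _ ≤ _ := measureReal_union_le _ _
    _ ≤ _ := add_le_add upper lower
    _ = _ := (two_mul _).symm

end Chernoff

theorem stmt8_general {Ω : Type*} [MeasurableSpace Ω] (μ : Measure Ω)
    [IsProbabilityMeasure μ] (n : ℕ) (p t : ℝ)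
    (hp : 0 ≤ p ∧ p ≤ 1) (ht : 0 ≤ t ∧ t ≤ 1)
    (X : Fin n → Ω → ℕ) (hmeas : ∀ i, Measurable (X i))
    (hindep : iIndepFun X μ)
    (hdist : ∀ i k, μ {ω | X i ω = k} =
      ENNReal.ofReal ((p / (1 + p)) ^ k * (1 / (1 + p)))) :
    μ {ω | t ≤ |(1 / (n : ℝ)) * ∑ i, ((X i ω : ℝ) - p)|} ≤
      ENNReal.ofReal (2 * Real.exp (-(n : ℝ) * t ^ 2 / 8)) := by
  obtain ⟨hp0, hp1⟩ := hp
  obtain ⟨ht0, ht1⟩ := ht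
  have hs : t / 4 ≤ 1 / 4 := by linarith
  have tail := measure_abs_sum_sub_ge_le (Y := fun i ω => (X i ω : ℝ)) (m := p) (v := 2)
    (hindep.comp (fun _ => ((↑) : ℕ → ℝ)) fun _ => measurable_from_top)
    (fun i => measurable_from_top.comp (hmeas i)) (by positivity : 0 ≤ t / 4)
    (fun i c hc => integrable_exp_mul_geometric (hmeas i) (hdist i) hp0
      (mul_exp_sub_one_lt_one hp0 hp1 (hc.trans hs)))
    (fun i c hc => mgf_geometric_le (hmeas i) (hdist i) hp0 hp1 (hc.trans hs)) t
  have hsub : {ω | t ≤ |(1 / (n : ℝ)) * ∑ i, ((X i ω : ℝ) - p)|} ⊆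
      {ω | (n : ℝ) * t ≤ |∑ i, ((X i ω : ℝ) - p)|} := by
    intro ω hω
    rcases Nat.eq_zero_or_pos n with rfl | hn
    · simp
    · simp only [Set.mem_ofPred_eq, abs_mul, abs_of_pos (by positivity : 0 < 1 / (n : ℝ))] at hω ⊢
      calc (n : ℝ) * t ≤ n * (1 / n * |∑ i, ((X i ω : ℝ) - p)|) := by gcongr
        _ = |∑ i, ((X i ω : ℝ) - p)| := by field_simp
  rw [Fintype.card_fin] at tail
  rw [← ofReal_measureReal]
  refine ENNReal.ofReal_le_ofReal ((measureReal_mono hsub).trans (tail.trans_eq ?_))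
  ring_nf

/-- Additive concentration for i.i.d. geometric random variables (failure-count
model, success probability `1/(1+p)`, mean `p`):
`Pr[ |(1/n) Σ (X_i − p)| ≥ t ] ≤ 2 exp(−n t² / 8)`. -/
theorem stmt8 {Ω : Type*} [MeasurableSpace Ω] (μ : Measure Ω)
    [IsProbabilityMeasure μ] (n : ℕ) (hn : 1 ≤ n) (p t : ℝ)
    (hp : 0 ≤ p ∧ p ≤ 1) (ht : 0 ≤ t ∧ t ≤ 1)
    (X : Fin n → Ω → ℕ) (hmeas : ∀ i, Measurable (X i))
    (hindep : iIndepFun X μ)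
    (hdist : ∀ i k, μ {ω | X i ω = k} =
      ENNReal.ofReal ((p / (1 + p)) ^ k * (1 / (1 + p)))) :
    μ {ω | t ≤ |(1 / (n : ℝ)) * ∑ i, ((X i ω : ℝ) - p)|} ≤
      ENNReal.ofReal (2 * Real.exp (-(n : ℝ) * t ^ 2 / 8)) :=
  stmt8_general μ n p t hp ht X hmeas hindep hdist
end

section
/- Let a, v, b ∈ [0,1]^N with a ≼ v ≼ b componentwise, and suppose v_i > 0 for all i. Fix an item i ∈ [N] and define g ∈ [0,1]^N by g_j = a_j for j ≠ i and g_i = b_i. Then for every θ ∈ [0,1], if i ∈ Top([N], v, θ) then i ∈ Top([N], g, θ). -/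
/-!
Rank items by the key `(r j - θ) * w j`. Passing from `v` to `g` raises the key of `i` (as
`v i ≤ b i`) and lowers the key of every competitor `j` with `θ < r j` (as `a j ≤ v j`), while a
competitor with `r j ≤ θ` has key `≤ 0 < (r i - θ) * v i`. Hence every item ranked behind `i`
under `v` is still behind `i` under `g`, so fewer items precede `i` and it stays among the first
`min K N`.
-/

theorem List.idxOf_eq_countP_of_pairwise {α : Type*} [DecidableEq α] {rel : α → α → Prop}
    [DecidableRel rel] [Std.Antisymm rel] {i : α} (hi : rel i i) :
    ∀ {l : List α}, l.Pairwise rel → i ∈ l → l.idxOf i = l.countP (fun j => ¬ rel i j)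
  | [], _, h => absurd h List.not_mem_nil
  | x :: t, hl, hmem => by
    rw [List.pairwise_cons] at hl
    by_cases hx : x = i
    · subst hx
      rw [List.idxOf_cons_self, eq_comm, List.countP_eq_zero]
      simp only [List.mem_cons, decide_not, Bool.not_eq_eq_eq_not, Bool.not_true,
        decide_eq_false_iff_not, not_not, forall_eq_or_imp]
      exact ⟨hi, hl.1⟩
    · have hit : i ∈ t := (List.mem_cons.mp hmem).resolve_left (Ne.symm hx)
      have hix : ¬ rel i x := fun h => hx (antisymm_of rel (hl.1 i hit) h)
      rw [List.idxOf_cons_ne _ hx, List.countP_cons_of_pos (by simpa using hix),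
        List.idxOf_eq_countP_of_pairwise hi hl.2 hit]

theorem List.mem_take_insertionSort_iff {α : Type*} [DecidableEq α] {rel : α → α → Prop}
    [DecidableRel rel] [Std.Total rel] [IsTrans α rel] [Std.Antisymm rel] {i : α} {l : List α}
    (hmem : i ∈ l) (m : ℕ) :
    i ∈ (l.insertionSort rel).take m ↔ l.countP (fun j => ¬ rel i j) < m := by
  have hperm := List.perm_insertionSort rel l
  have hmem' := hperm.mem_iff.mpr hmem
  rw [List.mem_take_iff_idxOf_lt hmem',
    List.idxOf_eq_countP_of_pairwise ((total_of rel i i).elim id id)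
      (List.pairwise_insertionSort _ _) hmem',
    hperm.countP_eq]

section Rank

variable {ι α : Type*} [LinearOrder ι] [LinearOrder α]

/-- The order by which `TopSet` sorts, for `f k = (r k - θ) * w k`. It is reducible so that it
matches the relation and decidability instance written out in `TopSet`. -/
abbrev RankLE (f : ι → α) (i j : ι) : Prop := f j < f i ∨ (f i = f j ∧ i ≤ j)

theorem rankLE_iff_toLex_le {f : ι → α} {i j : ι} :
    RankLE f i j ↔ toLex (OrderDual.toDual (f i), i) ≤ toLex (OrderDual.toDual (f j), j) := by
  rw [Prod.Lex.toLex_le_toLex]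
  rfl

theorem RankLE.refl (f : ι → α) (i : ι) : RankLE f i i := Or.inr ⟨rfl, le_rfl⟩

instance (f : ι → α) : Std.Total (RankLE f) :=
  ⟨fun i j => by simp only [rankLE_iff_toLex_le]; exact le_total _ _⟩

instance (f : ι → α) : IsTrans ι (RankLE f) :=
  ⟨fun i j k => by simp only [rankLE_iff_toLex_le]; exact le_trans⟩

instance (f : ι → α) : Std.Antisymm (RankLE f) :=
  ⟨fun i j hij hji => by
    rw [rankLE_iff_toLex_le] at hij hji
    exact congrArg (fun p => (ofLex p).2) (le_antisymm hij hji)⟩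

theorem RankLE.of_le_of_le {f g : ι → α} {i j : ι} (hi : f i ≤ g i) (hj : g j ≤ f j)
    (h : RankLE f i j) : RankLE g i j := by
  rcases h with h | ⟨h, hij⟩
  · exact Or.inl (by order)
  · rcases (show g j ≤ g i by order).lt_or_eq with h' | h'
    · exact Or.inl h'
    · exact Or.inr ⟨h'.symm, hij⟩

end Rank

theorem mem_topSet_iff {N K : ℕ} {r w : Fin N → ℝ} {θ : ℝ} {i : Fin N} :
    i ∈ TopSet N K r w θ ↔
      (List.finRange N).countP (fun j => ¬ RankLE (fun k => (r k - θ) * w k) i j) < min K N ∧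
        θ < r i := by
  rw [TopSet, Finset.mem_filter, List.mem_toFinset,
    List.mem_take_insertionSort_iff (rel := RankLE fun k => (r k - θ) * w k) (List.mem_finRange i)]

theorem mem_topSet_of_rankLE_imp {N K : ℕ} {r v g : Fin N → ℝ} {θ : ℝ} {i : Fin N}
    (hrank : ∀ j, RankLE (fun k => (r k - θ) * v k) i j → RankLE (fun k => (r k - θ) * g k) i j)
    (hi : i ∈ TopSet N K r v θ) : i ∈ TopSet N K r g θ := by
  rw [mem_topSet_iff] at hi ⊢
  refine ⟨lt_of_le_of_lt (List.countP_mono_left fun j _ => ?_) hi.1, hi.2⟩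
  simpa only [decide_eq_true_eq] using mt (hrank j)

theorem rankLE_update_of_le {N : ℕ} {r a v b : Fin N → ℝ} {θ : ℝ} {i : Fin N}
    (hri : θ < r i) (hvi : 0 < v i) (ha : ∀ j, 0 ≤ a j) (hav : ∀ j, a j ≤ v j)
    (hvb : v i ≤ b i) (j : Fin N) (h : RankLE (fun k => (r k - θ) * v k) i j) :
    RankLE (fun k => (r k - θ) * Function.update a i (b i) k) i j := by
  rcases eq_or_ne j i with rfl | hji
  · exact RankLE.refl _ j
  have hgi : (r i - θ) * v i ≤ (r i - θ) * Function.update a i (b i) i := by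
    rw [Function.update_self]
    exact mul_le_mul_of_nonneg_left hvb (by linarith)
  rcases le_or_gt (r j) θ with hrj | hrj
  · have hgj : (r j - θ) * Function.update a i (b i) j ≤ 0 := by
      rw [Function.update_of_ne hji]
      exact mul_nonpos_of_nonpos_of_nonneg (by linarith) (ha j)
    have : 0 < (r i - θ) * v i := mul_pos (by linarith) hvi
    exact Or.inl (by linarith)
  · refine h.of_le_of_le hgi ?_
    rw [Function.update_of_ne hji]
    exact mul_le_mul_of_nonneg_left (hav j) (by linarith)

theorem stmt9_general (N K : ℕ) (r a v b : Fin N → ℝ)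
    (ha : ∀ j, 0 ≤ a j ∧ a j ≤ 1) (hv : ∀ j, 0 < v j ∧ v j ≤ 1)
    (hav : ∀ j, a j ≤ v j) (hvb : ∀ j, v j ≤ b j)
    (i : Fin N) (θ : ℝ) :
    i ∈ TopSet N K r v θ → i ∈ TopSet N K r (Function.update a i (b i)) θ := fun hi =>
  mem_topSet_of_rankLE_imp
    (rankLE_update_of_le (mem_topSet_iff.mp hi).2 (hv i).1 (fun j => (ha j).1) hav (hvb i)) hi

/-- If `a ≼ v ≼ b` and `g` agrees with `a` everywhere except `g i = b i`, then
for every `θ ∈ [0,1]`: `i ∈ Top([N], v, θ)` implies `i ∈ Top([N], g, θ)`. -/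
theorem stmt9 (N K : ℕ) (hK : 1 ≤ K) (hKN : K ≤ N) (r a v b : Fin N → ℝ)
    (hr : ∀ j, 0 < r j ∧ r j ≤ 1)
    (ha : ∀ j, 0 ≤ a j ∧ a j ≤ 1) (hv : ∀ j, 0 < v j ∧ v j ≤ 1)
    (hb : ∀ j, 0 ≤ b j ∧ b j ≤ 1)
    (hav : ∀ j, a j ≤ v j) (hvb : ∀ j, v j ≤ b j)
    (i : Fin N) (θ : ℝ) (hθ : 0 ≤ θ ∧ θ ≤ 1) :
    i ∈ TopSet N K r v θ → i ∈ TopSet N K r (Function.update a i (b i)) θ :=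
  stmt9_general N K r a v b ha hv hav hvb i θ
end

section
/- Let a, v, b ∈ [0,1]^N with a ≼ v ≼ b componentwise and v_j > 0 for all j, let ε ∈ (0,1), and suppose max{b_j − v_j, v_j − a_j} ≤ ε/K for every j ∈ [N]. Let θ_a, θ_v, θ_b be the optimal expected rewards under a, v, b, and let S_v = Top([N], v, θ_v) be the best assortment. Then every item i ∈ [N] \ S_v whose reward gap satisfies Δ_i > 8ε satisfies: for every θ ∈ [θ_a, θ_b], i ∉ Top([N], g^{(i)}, θ), where g^{(i)} agrees with a on all coordinates except that its i-th coordinate equals b_i. -/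
/-- The `k`-th largest value of `f` over `Fin N` (1-indexed). -/
noncomputable def kthLargest (N k : ℕ) (f : Fin N → ℝ) : ℝ :=
  (List.insertionSort (· ≥ ·) ((List.finRange N).map f)).getD (k - 1) 0

/-! Perturbing the preferences by at most `ε/K` per coordinate moves the reward of every
assortment of size at most `K`, hence the optimum, by at most `ε`; so `|θ - θ_v| ≤ ε` for
`θ ∈ [θ_a, θ_b]`. As `|r_k - θ_v| ≤ 1`, every score `(r_k - θ) w_k` with `|w_k - v_k| ≤ ε` is
then within `2ε` of the advantage `η_k`. If `|S_v| = K`, each of the `K` items of `S_v` keeps a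
score of at least `η⁽ᴷ⁾ - 2ε` under `g⁽ⁱ⁾`, while `i` scores at most `η_i + 2ε < η⁽ᴷ⁾ - 2ε`, so
`i` is not among the top `K`. If `|S_v| < K`, then `θ_v - r_i ≥ -η_i > 8ε`, so `r_i < θ` and `i`
is filtered out. -/

open Finset

namespace List

variable {α : Type*} {R : α → α → Prop} {L : List α}

theorem Pairwise.notMem_take_of_card_le [DecidableEq α] (hL : L.Pairwise R) {n : ℕ} {i : α}
    (T : Finset α) (hTL : ∀ j ∈ T, j ∈ L) (hcard : n ≤ #T) (hiT : i ∉ T)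
    (hdom : ∀ j ∈ T, ¬ R i j) : i ∉ L.take n := by
  intro hi
  obtain ⟨j, hjT, hj⟩ : ∃ j ∈ T, j ∉ L.take n := by
    by_contra! hsub
    have : insert i T ⊆ (L.take n).toFinset := by
      rw [insert_subset_iff]
      exact ⟨mem_toFinset.2 hi, fun j hj => mem_toFinset.2 (hsub j hj)⟩
    have := (card_le_card this).trans (toFinset_card_le _)
    rw [card_insert_of_notMem hiT, length_take] at this
    omega
  have hjL := hTL j hjT
  rw [← L.take_append_drop n, mem_append] at hjL
  exact hdom j hjT (hL.rel_of_mem_take_of_mem_drop hi (hjL.resolve_left hj))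

end List

theorem kthLargest_le_of_mem_take {N K : ℕ} {f : Fin N → ℝ} {L : List (Fin N)}
    (hL : L.Pairwise (fun i j => f j ≤ f i)) (hperm : L.Perm (List.finRange N))
    (hKN : K ≤ N) {j : Fin N} (hj : j ∈ L.take K) : kthLargest N K f ≤ f j := by
  have hsorted : L.map f = List.insertionSort (· ≥ ·) ((List.finRange N).map f) :=
    List.Perm.eq_of_sortedGE (List.sortedGE_iff_pairwise.2 (List.pairwise_map.2 hL))
      List.sortedGE_insertionSort ((hperm.map f).trans (List.perm_insertionSort _ _).symm)
  have hlen : (L.map f).length = N := by simp [hperm.length_eq]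
  obtain ⟨m, hm, rfl⟩ := List.mem_take_iff_getElem.mp hj
  rw [kthLargest, ← hsorted, List.getD_eq_getElem _ _ (by omega), List.getElem_map]
  obtain hmK | hmK := (show m ≤ K - 1 by omega).eq_or_lt
  · simp only [hmK, le_refl]
  · exact List.pairwise_iff_getElem.1 hL _ _ _ _ hmK

def RanksAhead {N : ℕ} (f : Fin N → ℝ) (i j : Fin N) : Prop :=
  f j < f i ∨ (f i = f j ∧ i ≤ j)

section RanksAhead

variable {N : ℕ} (f : Fin N → ℝ)

-- Definitionally the instance with which `TopSet` sorts, so its list is sorted by `RanksAhead`.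
noncomputable instance : DecidableRel (RanksAhead f) := fun i j =>
  inferInstanceAs (Decidable (f j < f i ∨ (f i = f j ∧ i ≤ j)))

instance : Std.Total (RanksAhead f) where
  total i j := by
    unfold RanksAhead
    rcases lt_trichotomy (f i) (f j) with h | h | h
    · exact Or.inr (Or.inl h)
    · rcases le_total i j with hij | hij
      · exact Or.inl (Or.inr ⟨h, hij⟩)
      · exact Or.inr (Or.inr ⟨h.symm, hij⟩)
    · exact Or.inl (Or.inl h)

instance : IsTrans (Fin N) (RanksAhead f) where
  trans i j k := by
    unfold RanksAhead
    rintro (hij | ⟨hij, hij'⟩) (hjk | ⟨hjk, hjk'⟩)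
    · exact Or.inl (hjk.trans hij)
    · exact Or.inl (hjk ▸ hij)
    · exact Or.inl (hij ▸ hjk)
    · exact Or.inr ⟨hij.trans hjk, hij'.trans hjk'⟩

theorem RanksAhead.le {f : Fin N → ℝ} {i j : Fin N} (h : RanksAhead f i j) : f j ≤ f i :=
  h.elim le_of_lt fun h => h.1.ge

end RanksAhead

section TopSet

variable {N K : ℕ} {r w : Fin N → ℝ} {θ : ℝ} {i j : Fin N}

theorem lt_of_mem_topSet (h : i ∈ TopSet N K r w θ) : θ < r i :=
  (mem_filter.1 h).2

theorem mem_take_of_mem_topSet (h : i ∈ TopSet N K r w θ) :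
    i ∈ ((List.finRange N).insertionSort (RanksAhead fun k => (r k - θ) * w k)).take (min K N) := by
  unfold TopSet at h
  exact List.mem_toFinset.1 (mem_filter.1 h).1

theorem notMem_topSet_of_dominated (T : Finset (Fin N)) (hcard : K ≤ #T) (hiT : i ∉ T)
    (hdom : ∀ j ∈ T, (r i - θ) * w i < (r j - θ) * w j) : i ∉ TopSet N K r w θ := fun h =>
  (List.pairwise_insertionSort _ _).notMem_take_of_card_le T
    (fun j _ => (List.perm_insertionSort _ _).mem_iff.2 (List.mem_finRange j))
    ((min_le_left _ _).trans hcard) hiT (fun j hj hij => (hdom j hj).not_ge hij.le)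
    (mem_take_of_mem_topSet h)

theorem kthLargest_le_of_mem_topSet (hKN : K ≤ N) (hj : j ∈ TopSet N K r w θ) :
    kthLargest N K (fun k => (r k - θ) * w k) ≤ (r j - θ) * w j := by
  have hj := mem_take_of_mem_topSet hj
  rw [min_eq_left hKN] at hj
  exact kthLargest_le_of_mem_take ((List.pairwise_insertionSort _ _).imp RanksAhead.le)
    (List.perm_insertionSort _ _) hKN hj

end TopSet

section Reward

variable {N K : ℕ} {r u w : Fin N → ℝ}

theorem rew_le_add_sum_sub (S : Finset (Fin N)) (hr0 : ∀ j, 0 ≤ r j) (hr1 : ∀ j, r j ≤ 1)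
    (hu : ∀ j, 0 ≤ u j) (huw : ∀ j, u j ≤ w j) :
    Rew r w S ≤ Rew r u S + ∑ j ∈ S, (w j - u j) := by
  set D := ∑ j ∈ S, (w j - u j)
  have hD : 0 ≤ D := sum_nonneg fun j _ => sub_nonneg.2 (huw j)
  have hB : 0 ≤ ∑ j ∈ S, u j := sum_nonneg fun j _ => hu j
  have hA : 0 ≤ ∑ j ∈ S, r j * u j := sum_nonneg fun j _ => mul_nonneg (hr0 j) (hu j)
  have hB' : ∑ j ∈ S, w j = ∑ j ∈ S, u j + D := by
    simp only [D, sum_sub_distrib]; ring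
  have hA' : ∑ j ∈ S, r j * w j ≤ ∑ j ∈ S, r j * u j + D := by
    rw [← sum_add_distrib]
    refine sum_le_sum fun j _ => ?_
    nlinarith [hr1 j, huw j]
  calc Rew r w S ≤ (∑ j ∈ S, r j * u j + D) / (1 + ∑ j ∈ S, u j) := by
        rw [Rew, hB']
        exact div_le_div₀ (by positivity) hA' (by positivity) (by linarith)
    _ = Rew r u S + D / (1 + ∑ j ∈ S, u j) := by rw [Rew, add_div]
    _ ≤ Rew r u S + D := by gcongr; exact div_le_self hD (by linarith)

theorem thetaOpt_nonneg : 0 ≤ thetaOpt N K r u :=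
  le_of_eq_of_le (by simp [Rew]) (le_sup' (Rew r u) (by simp : ∅ ∈ _))

theorem thetaOpt_le_one (hr1 : ∀ j, r j ≤ 1) (hu : ∀ j, 0 ≤ u j) : thetaOpt N K r u ≤ 1 := by
  refine sup'_le _ _ fun S _ => ?_
  have hB : 0 ≤ ∑ j ∈ S, u j := sum_nonneg fun j _ => hu j
  rw [Rew, div_le_one (by linarith)]
  have : ∑ j ∈ S, r j * u j ≤ ∑ j ∈ S, u j :=
    sum_le_sum fun j _ => mul_le_of_le_one_left (hu j) (hr1 j)
  linarith

theorem thetaOpt_le_add {ε : ℝ} (hε : 0 ≤ ε) (hr0 : ∀ j, 0 ≤ r j) (hr1 : ∀ j, r j ≤ 1)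
    (hu : ∀ j, 0 ≤ u j) (huw : ∀ j, u j ≤ w j) (hwu : ∀ j, w j - u j ≤ ε / K) :
    thetaOpt N K r w ≤ thetaOpt N K r u + ε := by
  refine sup'_le _ _ fun S hS => ?_
  have hcard : (#S : ℝ) ≤ K := by exact_mod_cast (mem_filter.1 hS).2
  calc Rew r w S ≤ Rew r u S + ∑ j ∈ S, (w j - u j) := rew_le_add_sum_sub S hr0 hr1 hu huw
    _ ≤ thetaOpt N K r u + #S / K * ε := by
        gcongr
        · exact le_sup' (Rew r u) hS
        · calc ∑ j ∈ S, (w j - u j) ≤ #S • (ε / K) := sum_le_card_nsmul _ _ _ fun j _ => hwu j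
            _ = #S / K * ε := by rw [nsmul_eq_mul]; ring
    _ ≤ thetaOpt N K r u + ε := by
        gcongr
        exact mul_le_of_le_one_left hε (div_le_one_of_le₀ hcard (Nat.cast_nonneg K))

end Reward

theorem abs_sub_mul_sub_mul_le {ρ θ θ' x y δ ε : ℝ} (hρ : |ρ - θ'| ≤ 1) (hθ : |θ - θ'| ≤ ε)
    (hxy : |x - y| ≤ δ) (hx : |x| ≤ 1) : |(ρ - θ) * x - (ρ - θ') * y| ≤ δ + ε := by
  calc |(ρ - θ) * x - (ρ - θ') * y| = |(ρ - θ') * (x - y) + (θ' - θ) * x| := by ring_nf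
    _ ≤ |ρ - θ'| * |x - y| + |θ' - θ| * |x| := by
        rw [← abs_mul, ← abs_mul]; exact abs_add_le _ _
    _ ≤ 1 * δ + ε * 1 := by
        rw [abs_sub_comm θ']
        gcongr
        exact (abs_nonneg _).trans hθ
    _ = δ + ε := by ring

theorem stmt11_general (N K : ℕ) (hKN : K ≤ N) (r a v b : Fin N → ℝ)
    (ε : ℝ) (hε : 0 < ε ∧ ε < 1)
    (hr : ∀ j, 0 < r j ∧ r j ≤ 1)
    (ha : ∀ j, 0 ≤ a j ∧ a j ≤ 1) (hv : ∀ j, 0 < v j ∧ v j ≤ 1)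
    (hb : ∀ j, 0 ≤ b j ∧ b j ≤ 1)
    (hav : ∀ j, a j ≤ v j) (hvb : ∀ j, v j ≤ b j)
    (hest : ∀ j, max (b j - v j) (v j - a j) ≤ ε / K)
    (i : Fin N) (hi : i ∉ TopSet N K r v (thetaOpt N K r v))
    (hΔ : 8 * ε <
      if (TopSet N K r v (thetaOpt N K r v)).card = K then
        kthLargest N K (fun j => (r j - thetaOpt N K r v) * v j) -
          (r i - thetaOpt N K r v) * v i
      else -((r i - thetaOpt N K r v) * v i)) :
    ∀ θ, thetaOpt N K r a ≤ θ → θ ≤ thetaOpt N K r b →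
      i ∉ TopSet N K r (Function.update a i (b i)) θ := by
  intro θ hθa hθb
  set θv := thetaOpt N K r v
  have hεK : ε / K ≤ ε := div_nat_le_self_of_nonnneg hε.1.le K
  have hbv j : b j - v j ≤ ε / K := (le_max_left _ _).trans (hest j)
  have hva j : v j - a j ≤ ε / K := (le_max_right _ _).trans (hest j)
  have hθ : |θ - θv| ≤ ε := by
    have hθv : θv ≤ thetaOpt N K r a + ε := thetaOpt_le_add hε.1.le (fun j => (hr j).1.le)
      (fun j => (hr j).2) (fun j => (ha j).1) hav hva
    have hθb' : thetaOpt N K r b ≤ θv + ε := thetaOpt_le_add hε.1.le (fun j => (hr j).1.le)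
      (fun j => (hr j).2) (fun j => (hv j).1.le) hvb hbv
    exact abs_sub_le_iff.2 ⟨by linarith, by linarith⟩
  split_ifs at hΔ with hfull
  · have hgap k : |r k - θv| ≤ 1 := abs_sub_le_of_nonneg_of_le (hr k).1.le (hr k).2
      thetaOpt_nonneg (thetaOpt_le_one (fun j => (hr j).2) (fun j => (hv j).1.le))
    refine notMem_topSet_of_dominated _ hfull.ge hi fun j hj => ?_
    rw [Function.update_self, Function.update_of_ne (ne_of_mem_of_not_mem hj hi)]
    have hi' := abs_le.1 <| abs_sub_mul_sub_mul_le (hgap i) hθ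
      (abs_sub_le_iff.2 ⟨(hbv i).trans hεK, by linarith [hvb i]⟩)
      (abs_le.2 ⟨by linarith [hb i], (hb i).2⟩)
    have hj' := abs_le.1 <| abs_sub_mul_sub_mul_le (hgap j) hθ
      (abs_sub_le_iff.2 ⟨by linarith [hav j], (hva j).trans hεK⟩)
      (abs_le.2 ⟨by linarith [ha j], (ha j).2⟩)
    have := kthLargest_le_of_mem_topSet hKN hj
    linarith
  · intro hmem
    have hri := lt_of_mem_topSet hmem
    have : 0 < ε - (θv - r i) := by linarith [(abs_le.1 hθ).1]
    nlinarith [mul_pos this (hv i).1, (hv i).2]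

/-- If `a ≼ v ≼ b`, the entrywise estimation error is at most `ε/K`, and
`i ∉ S_v` has reward gap `Δ_i > 8ε` (where `Δ_i = η⁽ᴷ⁾ − η_i` if `|S_v| = K`
and `Δ_i = −η_i` otherwise, with `η_j = (r_j − θ_v) v_j`), then for every
`θ ∈ [θ_a, θ_b]` we have `i ∉ Top([N], g⁽ⁱ⁾, θ)`, where `g⁽ⁱ⁾` agrees with `a`
except that its `i`-th coordinate is `b i`. -/
theorem stmt11 (N K : ℕ) (hK : 1 ≤ K) (hKN : K ≤ N) (r a v b : Fin N → ℝ)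
    (ε : ℝ) (hε : 0 < ε ∧ ε < 1)
    (hr : ∀ j, 0 < r j ∧ r j ≤ 1)
    (ha : ∀ j, 0 ≤ a j ∧ a j ≤ 1) (hv : ∀ j, 0 < v j ∧ v j ≤ 1)
    (hb : ∀ j, 0 ≤ b j ∧ b j ≤ 1)
    (hav : ∀ j, a j ≤ v j) (hvb : ∀ j, v j ≤ b j)
    (hest : ∀ j, max (b j - v j) (v j - a j) ≤ ε / K)
    (i : Fin N) (hi : i ∉ TopSet N K r v (thetaOpt N K r v))
    (hΔ : 8 * ε <
      if (TopSet N K r v (thetaOpt N K r v)).card = K then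
        kthLargest N K (fun j => (r j - thetaOpt N K r v) * v j) -
          (r i - thetaOpt N K r v) * v i
      else -((r i - thetaOpt N K r v) * v i)) :
    ∀ θ, thetaOpt N K r a ≤ θ → θ ≤ thetaOpt N K r b →
      i ∉ TopSet N K r (Function.update a i (b i)) θ :=
  stmt11_general N K hKN r a v b ε hε hr ha hv hb hav hvb hest i hi hΔ
end

section
/- Let K ≥ 2 and δ ∈ (0, 1/(4K)). Consider the instance I_1 with N = K items having rewards r_1 = … = r_{K−1} = 1, r_K = (1−δ)/(2−δ), and preferences v_1 = … = v_{K−1} = 1/(K−1), v_K = 1. Then the optimal expected reward over assortments of size at most K is θ_v = 1/2, attained (uniquely among subsets not containing item K, and by no subset containing item K) by the assortment S_v = {1, …, K−1}; in particular R({1, …, K−1}, v) = 1/2 and R(S, v) < 1/2 for every S ⊆ [K] with K ∈ S. -/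
open Finset

theorem sum_lt_sum_of_ne_of_pos_of_neg {ι M : Type*} [DecidableEq ι] [AddCommGroup M]
    [PartialOrder M] [IsOrderedAddMonoid M] {w : ι → M} {S T : Finset ι}
    (hpos : ∀ i ∈ T, 0 < w i) (hneg : ∀ i ∉ T, w i < 0) (hST : S ≠ T) :
    ∑ i ∈ S, w i < ∑ i ∈ T, w i := by
  rw [← sum_inter_add_sum_sdiff S T w]
  obtain hdiff | hdiff := (S \ T).eq_empty_or_nonempty
  · have hsub : S ⊂ T := Finset.ssubset_iff_subset_ne.2 ⟨sdiff_eq_empty_iff_subset.1 hdiff, hST⟩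
    obtain ⟨i, hiT, hiS⟩ := exists_of_ssubset hsub
    rw [hdiff, sum_empty, add_zero, inter_eq_left.2 hsub.subset]
    exact sum_lt_sum_of_subset hsub.subset hiT hiS (hpos i hiT) fun j hj _ => (hpos j hj).le
  · have hinter : ∑ i ∈ S ∩ T, w i ≤ ∑ i ∈ T, w i :=
      sum_le_sum_of_subset_of_nonneg inter_subset_right fun i hi _ => (hpos i hi).le
    exact add_lt_of_le_of_neg hinter (sum_neg (fun i hi => hneg i (mem_sdiff.1 hi).2) hdiff)

section Rew

variable {N : ℕ} {r v : Fin N → ℝ} {S : Finset (Fin N)}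

lemma one_add_sum_pos (hv : ∀ i ∈ S, 0 ≤ v i) : 0 < 1 + ∑ i ∈ S, v i := by
  linarith [sum_nonneg hv]

lemma sum_sub_mul_eq (t : ℝ) :
    ∑ i ∈ S, (r i - t) * v i = ∑ i ∈ S, r i * v i - t * ∑ i ∈ S, v i := by
  simp only [sub_mul, sum_sub_distrib, mul_sum]

lemma Rew_lt_iff (hv : ∀ i ∈ S, 0 ≤ v i) (t : ℝ) :
    Rew r v S < t ↔ ∑ i ∈ S, (r i - t) * v i < t := by
  rw [Rew, div_lt_iff₀ (one_add_sum_pos hv), sum_sub_mul_eq]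
  constructor <;> intro h <;> linarith

lemma Rew_eq_iff (hv : ∀ i ∈ S, 0 ≤ v i) (t : ℝ) :
    Rew r v S = t ↔ ∑ i ∈ S, (r i - t) * v i = t := by
  rw [Rew, div_eq_iff (one_add_sum_pos hv).ne', sum_sub_mul_eq]
  constructor <;> intro h <;> linarith

lemma thetaOpt_eq_of_forall_le {K : ℕ} (hS : S.card ≤ K) (h : ∀ T, Rew r v T ≤ Rew r v S) :
    thetaOpt N K r v = Rew r v S :=
  le_antisymm (sup'_le _ _ fun T _ => h T)
    (le_sup' (Rew r v) (mem_filter.2 ⟨mem_powerset.2 (subset_univ S), hS⟩))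

end Rew

section InstanceI₁

variable {K : ℕ} {δ : ℝ} {r v : Fin K → ℝ}

lemma sub_half_mul_eq_of_lt (hr : ∀ i, r i = if (i : ℕ) < K - 1 then 1 else (1 - δ) / (2 - δ))
    (hv : ∀ i, v i = if (i : ℕ) < K - 1 then 1 / ((K : ℝ) - 1) else 1) {i : Fin K}
    (hi : (i : ℕ) < K - 1) : (r i - 1 / 2) * v i = 1 / (2 * ((K : ℝ) - 1)) := by
  rw [hr, hv, if_pos hi, if_pos hi]
  field_simp
  norm_num

lemma sub_half_mul_neg_of_not_lt (hδ₀ : 0 < δ) (hδ₂ : δ < 2)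
    (hr : ∀ i, r i = if (i : ℕ) < K - 1 then 1 else (1 - δ) / (2 - δ))
    (hv : ∀ i, v i = if (i : ℕ) < K - 1 then 1 / ((K : ℝ) - 1) else 1) {i : Fin K}
    (hi : ¬ (i : ℕ) < K - 1) : (r i - 1 / 2) * v i < 0 := by
  rw [hr, hv, if_neg hi, if_neg hi, mul_one, sub_neg, div_lt_iff₀ (by linarith)]
  linarith

lemma sum_sub_half_mul_head (hK : 2 ≤ K)
    (hr : ∀ i, r i = if (i : ℕ) < K - 1 then 1 else (1 - δ) / (2 - δ))
    (hv : ∀ i, v i = if (i : ℕ) < K - 1 then 1 / ((K : ℝ) - 1) else 1) :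
    ∑ i ∈ univ.filter (fun i : Fin K => (i : ℕ) < K - 1), (r i - 1 / 2) * v i = 1 / 2 := by
  rw [sum_congr rfl fun i hi => sub_half_mul_eq_of_lt hr hv (mem_filter.1 hi).2, sum_const,
    Fin.card_filter_val_lt, min_eq_right (Nat.sub_le K 1), nsmul_eq_mul,
    Nat.cast_sub (by omega : 1 ≤ K), Nat.cast_one]
  have : (K : ℝ) - 1 ≠ 0 := by
    have : (2 : ℝ) ≤ K := by exact_mod_cast hK
    linarith
  field_simp

end InstanceI₁

/-- For instance `I₁` (rewards `r_1 = … = r_{K−1} = 1`, `r_K = (1−δ)/(2−δ)`;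
preferences `v_1 = … = v_{K−1} = 1/(K−1)`, `v_K = 1`), the optimal expected
reward is `θ_v = 1/2`, attained by `S_v = {1, …, K−1}`; this is the unique
maximizer among subsets not containing item `K`, and every subset containing
item `K` has expected reward `< 1/2`. -/
theorem stmt13 (K : ℕ) (hK : 2 ≤ K) (δ : ℝ) (hδ : 0 < δ ∧ δ < 1 / (4 * K))
    (r v : Fin K → ℝ)
    (hr : ∀ i, r i = if (i : ℕ) < K - 1 then 1 else (1 - δ) / (2 - δ))
    (hv : ∀ i, v i = if (i : ℕ) < K - 1 then 1 / ((K : ℝ) - 1) else 1) :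
    thetaOpt K K r v = 1 / 2 ∧
      Rew r v (Finset.univ.filter (fun i : Fin K => (i : ℕ) < K - 1)) = 1 / 2 ∧
      (∀ S : Finset (Fin K), (⟨K - 1, by omega⟩ : Fin K) ∉ S →
        Rew r v S = 1 / 2 → S = Finset.univ.filter (fun i : Fin K => (i : ℕ) < K - 1)) ∧
      (∀ S : Finset (Fin K), (⟨K - 1, by omega⟩ : Fin K) ∈ S →
        Rew r v S < 1 / 2) := by
  obtain ⟨hδ₀, hδ⟩ := hδ
  have hδ₂ : δ < 2 := by
    have : 1 / (4 * (K : ℝ)) ≤ 1 := div_le_one_of_le₀ (by norm_cast; omega) (by positivity)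
    linarith
  have hK₁ : (0 : ℝ) < K - 1 := by
    have : (2 : ℝ) ≤ K := by exact_mod_cast hK
    linarith
  set head := univ.filter (fun i : Fin K => (i : ℕ) < K - 1)
  have hv₀ : ∀ i, 0 ≤ v i := fun i => by
    rw [hv]
    split_ifs
    exacts [(one_div_pos.2 hK₁).le, zero_le_one]
  have hhead : Rew r v head = 1 / 2 :=
    (Rew_eq_iff (fun i _ => hv₀ i) _).2 (sum_sub_half_mul_head hK hr hv)
  have hlt : ∀ S, S ≠ head → Rew r v S < 1 / 2 := fun S hS => by
    refine (Rew_lt_iff (fun i _ => hv₀ i) _).2 ?_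
    refine lt_of_lt_of_eq ?_ (sum_sub_half_mul_head hK hr hv)
    refine sum_lt_sum_of_ne_of_pos_of_neg (fun i hi => ?_) (fun i hi => ?_) hS
    · rw [sub_half_mul_eq_of_lt hr hv (mem_filter.1 hi).2]
      exact one_div_pos.2 (by linarith)
    · exact sub_half_mul_neg_of_not_lt hδ₀ hδ₂ hr hv fun h => hi (mem_filter.2 ⟨mem_univ i, h⟩)
  have hmax : ∀ T, Rew r v T ≤ Rew r v head := fun T =>
    (eq_or_ne T head).elim (fun h => h ▸ le_rfl) fun h => hhead ▸ (hlt T h).le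
  have hcard : head.card ≤ K := (card_le_univ head).trans_eq (Fintype.card_fin K)
  refine ⟨(thetaOpt_eq_of_forall_le hcard hmax).trans hhead, hhead,
    fun S _ hS => not_ne_iff.1 fun hne => (hlt S hne).ne hS, fun S hS => hlt S ?_⟩
  rintro rfl
  exact lt_irrefl _ (mem_filter.1 hS).2
end

section
/- Let K ≥ 2 and δ ∈ (0, 1/(4K)). Consider the instance I_2 with N = K items having rewards r_1 = … = r_{K−1} = 1, r_K = (1−δ)/(2−δ), and preferences v_1 = 1/(K−1) − 2δ, v_2 = … = v_{K−1} = 1/(K−1), v_K = 1. Then R([K], v) ≥ (1−2δ)/(2−2δ), hence θ_v ≥ (1−2δ)/(2−2δ); moreover (1−δ)/(2−δ) − (1−2δ)/(2−2δ) ≥ δ/4. -/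
/-!
Drop the last item: the first `K - 1` items all have reward `1` and total preference `1 - 2δ`,
so on their own they earn exactly `(1 - 2δ)/(2 - 2δ)`. The last item's reward `(1 - δ)/(2 - δ)`
exceeds this by at least `δ/4 > 0`, and adding an item whose reward is at least the current
expected reward cannot lower it (a mediant inequality).
-/

open Finset

theorem Rew_le_Rew_cons {N : ℕ} (r v : Fin N → ℝ) {S : Finset (Fin N)} {i : Fin N} (hi : i ∉ S)
    (hvi : 0 ≤ v i) (hS : 0 < 1 + ∑ j ∈ S, v j) (h : Rew r v S ≤ r i) :
    Rew r v S ≤ Rew r v (S.cons i hi) := by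
  rw [Rew] at h ⊢
  rw [Rew, sum_cons, sum_cons, div_le_div_iff₀ hS (by linarith)]
  have h' := (div_le_iff₀ hS).1 h
  nlinarith [mul_le_mul_of_nonneg_right h' hvi]

theorem Rew_eq_of_forall_eq_one {N : ℕ} (r v : Fin N → ℝ) {S : Finset (Fin N)}
    (hr : ∀ i ∈ S, r i = 1) : Rew r v S = (∑ i ∈ S, v i) / (1 + ∑ i ∈ S, v i) := by
  rw [Rew, sum_congr rfl fun i hi => by rw [hr i hi, one_mul]]

theorem Rew_le_thetaOpt {N K : ℕ} (r v : Fin N → ℝ) {S : Finset (Fin N)} (hS : #S ≤ K) :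
    Rew r v S ≤ thetaOpt N K r v :=
  le_sup' (Rew r v) (mem_filter.2 ⟨mem_powerset.2 (subset_univ S), hS⟩)

theorem Fin.sum_univ_ite_val_eq_zero (n : ℕ) (a b : ℝ) :
    ∑ i : Fin (n + 1), (if (i : ℕ) = 0 then a else b) = a + n * b := by
  simp [Fin.sum_univ_succ]

theorem gap_le_sub_div (δ : ℝ) (hδ0 : 0 ≤ δ) (hδ1 : δ < 1) :
    δ / 4 ≤ (1 - δ) / (2 - δ) - (1 - 2 * δ) / (2 - 2 * δ) := by
  rw [div_sub_div _ _ (by linarith) (by linarith), div_le_div_iff₀ (by norm_num) (by nlinarith)]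
  nlinarith [mul_nonneg (mul_nonneg hδ0 hδ0) (by linarith : (0 : ℝ) ≤ 3 - δ)]

/-- For instance `I₂` (rewards `r_1 = … = r_{K−1} = 1`, `r_K = (1−δ)/(2−δ)`;
preferences `v_1 = 1/(K−1) − 2δ`, `v_2 = … = v_{K−1} = 1/(K−1)`, `v_K = 1`):
`R([K], v) ≥ (1−2δ)/(2−2δ)`, hence `θ_v ≥ (1−2δ)/(2−2δ)`; moreover
`(1−δ)/(2−δ) − (1−2δ)/(2−2δ) ≥ δ/4`. -/
theorem stmt15 (K : ℕ) (hK : 2 ≤ K) (δ : ℝ) (hδ : 0 < δ ∧ δ < 1 / (4 * K))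
    (r v : Fin K → ℝ)
    (hr : ∀ i, r i = if (i : ℕ) < K - 1 then 1 else (1 - δ) / (2 - δ))
    (hv : ∀ i, v i = if (i : ℕ) = 0 then 1 / ((K : ℝ) - 1) - 2 * δ
      else if (i : ℕ) < K - 1 then 1 / ((K : ℝ) - 1) else 1) :
    (1 - 2 * δ) / (2 - 2 * δ) ≤ Rew r v Finset.univ ∧
      (1 - 2 * δ) / (2 - 2 * δ) ≤ thetaOpt K K r v ∧
      δ / 4 ≤ (1 - δ) / (2 - δ) - (1 - 2 * δ) / (2 - 2 * δ) := by
  obtain ⟨hδ0, hδK⟩ := hδ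
  have hδ1 : δ < 1 := hδK.trans_le ((div_le_one (by positivity)).2 (by norm_cast; omega))
  obtain ⟨n, rfl⟩ := Nat.exists_eq_add_of_le' hK
  have hK1 : ((n + 2 : ℕ) : ℝ) - 1 = n + 1 := by push_cast; ring
  set S := univ.map (Fin.castSuccEmb : Fin (n + 1) ↪ Fin (n + 2))
  have hrS : ∀ i ∈ S, r i = 1 := by simp [S, hr, Fin.is_le]
  have hSv : ∑ i ∈ S, v i = 1 - 2 * δ := by
    simp only [S, sum_map, Fin.coe_castSuccEmb, hv, Fin.val_castSucc, Fin.is_lt, if_true,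
      show n + 2 - 1 = n + 1 from rfl, hK1, Fin.sum_univ_ite_val_eq_zero]
    field_simp
    ring
  have hRewS : Rew r v S = (1 - 2 * δ) / (2 - 2 * δ) := by
    rw [Rew_eq_of_forall_eq_one r v hrS, hSv]
    ring
  have hgap := gap_le_sub_div δ hδ0.le hδ1
  have hRew : (1 - 2 * δ) / (2 - 2 * δ) ≤ Rew r v univ := by
    rw [← hRewS, Fin.univ_castSuccEmb (n + 1)]
    refine Rew_le_Rew_cons r v _ (by simp [hv]) (by linarith) ?_
    rw [hRewS, hr]
    simp only [Fin.val_last, show n + 2 - 1 = n + 1 from rfl, lt_irrefl, if_false]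
    linarith
  exact ⟨hRew, hRew.trans (Rew_le_thetaOpt r v (by simp)), hgap⟩
end

section
/- Let δ > 0, V ≥ 0, and v₁ ∈ (0,1] satisfy 2δ/v₁ ≤ 1/2. Then −ln(1 − 2δ/(1+V)) + (v₁/(1+V))·ln(1 − 2δ/v₁) ≥ −4δ²/((1+V)·v₁). -/
/-- `log (1 - b) ≥ -(b + b^2)` for `0 ≤ b ≤ 1/2`. -/
lemma log_one_sub_ge (b : ℝ) (hb0 : 0 ≤ b) (hb : b ≤ 1 / 2) :
    -(b + b ^ 2) ≤ Real.log (1 - b) := by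
  have h1 : (0:ℝ) < 1 - b := by linarith
  have ht : 0 ≤ Real.log (1 - b)⁻¹ := by
    rw [Real.log_inv]
    have : Real.log (1 - b) ≤ 0 := Real.log_nonpos (by linarith) (by linarith)
    linarith
  have hs : Real.log (1 - b)⁻¹ ≤ Real.sinh (Real.log (1 - b)⁻¹) :=
    Real.self_le_sinh_iff.mpr ht
  rw [Real.sinh_log (by positivity), inv_inv] at hs
  have key : ((1 - b)⁻¹ - (1 - b)) / 2 ≤ b + b ^ 2 := by
    rw [div_le_iff₀ (by norm_num), sub_le_iff_le_add,
      inv_le_iff_one_le_mul₀ h1]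
    nlinarith
  have := hs.trans key
  rw [Real.log_inv] at this
  linarith

/-- Key inequality for the lower-bound submartingale: if `2δ/v₁ ≤ 1/2` then
`−ln(1 − 2δ/(1+V)) + (v₁/(1+V))·ln(1 − 2δ/v₁) ≥ −4δ²/((1+V)·v₁)`. -/
theorem stmt16 (δ V v₁ : ℝ) (hδ : 0 < δ) (hV : 0 ≤ V)
    (hv : 0 < v₁ ∧ v₁ ≤ 1) (h : 2 * δ / v₁ ≤ 1 / 2) :
    -Real.log (1 - 2 * δ / (1 + V)) +
        (v₁ / (1 + V)) * Real.log (1 - 2 * δ / v₁) ≥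
      -(4 * δ ^ 2) / ((1 + V) * v₁) := by
  obtain ⟨hv0, hv1⟩ := hv
  have hb0 : 0 ≤ 2 * δ / v₁ := by positivity
  have hVpos : (0:ℝ) < 1 + V := by linarith
  have ha : 2 * δ / (1 + V) ≤ 2 * δ / v₁ :=
    div_le_div_of_nonneg_left (by linarith) hv0 (by linarith)
  have ha0 : 0 < 2 * δ / (1 + V) := by positivity
  -- log(1-a) ≤ -a
  have h1 : Real.log (1 - 2 * δ / (1 + V)) ≤ -(2 * δ / (1 + V)) := by
    have := Real.log_le_sub_one_of_pos (x := 1 - 2 * δ / (1 + V)) (by linarith)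
    linarith
  -- log(1-b) ≥ -(b+b²)
  have h2 := log_one_sub_ge (2 * δ / v₁) hb0 h
  have hcoef : 0 ≤ v₁ / (1 + V) := by positivity
  have h3 := mul_le_mul_of_nonneg_left h2 hcoef
  have heq : v₁ / (1 + V) * (-(2 * δ / v₁ + (2 * δ / v₁) ^ 2)) =
      -(2 * δ / (1 + V)) - 4 * δ ^ 2 / ((1 + V) * v₁) := by
    field_simp
    ring
  rw [heq] at h3
  have : -(4 * δ ^ 2) / ((1 + V) * v₁) = -(2 * δ / (1+V)) - 4 * δ^2 / ((1+V)*v₁) + (2 * δ / (1+V)) := by ring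
  linarith
end

section
/- Let p ≥ 0, let T ≥ 1 be an integer, and let X_1, …, X_T be i.i.d. random variables with the geometric distribution on {0,1,2,…} with success probability 1/(1+p), i.e., Pr[X = k] = (p/(1+p))^k · (1/(1+p)) for each integer k ≥ 0. Then Pr[ Σ_{t=1}^{T} (X_t + 1) ≥ 5·(1+p)·T ] ≤ exp(−2T). -/
/-!
Chernoff bound. With success probability `q = 1/(1+p)`, the trial count `X + 1` has mgf
`q eᵗ / (1 - (1-q) eᵗ)`, and `eᵗ (1 - t) ≤ 1` bounds it by `q / (q - t)`, the mgf of an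
exponential variable with the same mean `1/q`. At `t = 3q/5` this is `5/2 < e`, so
`Pr[Σ (X_t + 1) ≥ 5T/q] ≤ e^{-3T} (5/2)^T ≤ e^{-2T}`.
-/

open MeasureTheory ProbabilityTheory Real Finset

lemma exp_mul_one_sub_le_one (t : ℝ) : exp t * (1 - t) ≤ 1 := by
  have h := mul_le_mul_of_nonneg_left (add_one_le_exp (-t)) (exp_pos t).le
  rwa [← exp_add, add_neg_cancel, exp_zero, neg_add_eq_sub] at h

lemma exp_mul_sub_le_one_sub_one_sub_mul_exp (q t : ℝ) :
    exp t * (q - t) ≤ 1 - (1 - q) * exp t := by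
  nlinarith [exp_mul_one_sub_le_one t]

lemma one_sub_mul_exp_lt_one {q t : ℝ} (htq : t < q) : (1 - q) * exp t < 1 := by
  nlinarith [exp_mul_sub_le_one_sub_one_sub_mul_exp q t, exp_pos t]

lemma hasSum_geometric_mul_exp_succ {q t : ℝ} (hq : q ≤ 1) (h : (1 - q) * exp t < 1) :
    HasSum (fun n : ℕ => (1 - q) ^ n * q * exp (t * (n + 1)))
      (q * exp t / (1 - (1 - q) * exp t)) := by
  have hr : 0 ≤ (1 - q) * exp t := mul_nonneg (sub_nonneg.mpr hq) (exp_pos t).le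
  have hterm (n : ℕ) :
      (1 - q) ^ n * q * exp (t * (n + 1)) = q * exp t * ((1 - q) * exp t) ^ n := by
    rw [mul_pow, ← exp_nat_mul, show t * (n + 1) = n * t + t by ring, exp_add]
    ring
  simp_rw [hterm, div_eq_mul_inv]
  exact (hasSum_geometric_of_lt_one hr h).mul_left (q * exp t)

lemma exp_neg_three_mul_mul_five_halves_pow_le (n : ℕ) :
    exp (-3 * n) * (5 / 2) ^ n ≤ exp (-2 * n) := by
  have h52 : (5 / 2 : ℝ) ^ n ≤ exp 1 ^ n :=
    pow_le_pow_left₀ (by norm_num) (by linarith [exp_one_gt_d9]) n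
  calc exp (-3 * n) * (5 / 2) ^ n ≤ exp (-3 * n) * exp 1 ^ n := by gcongr
    _ = exp (-2 * n) := by rw [← exp_nat_mul, ← exp_add]; ring_nf

namespace ProbabilityTheory

section Geometric

variable {q : unitInterval} {t : ℝ}

lemma integrable_exp_mul_succ_geometricMeasure (hq : q ≠ 0) (htq : t < q) :
    Integrable (fun n : ℕ => exp (t * (n + 1))) (geometricMeasure q) := by
  rw [integrable_geometricMeasure_iff hq]
  simpa only [norm_eq_abs, abs_exp] using
    (hasSum_geometric_mul_exp_succ q.2.2 (one_sub_mul_exp_lt_one htq)).summable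

lemma mgf_succ_geometricMeasure (hq : q ≠ 0) (h : (1 - q) * exp t < 1) :
    mgf (fun n : ℕ => (n : ℝ) + 1) (geometricMeasure q) t =
      q * exp t / (1 - (1 - q) * exp t) := by
  rw [mgf, integral_geometricMeasure hq]
  exact (hasSum_geometric_mul_exp_succ q.2.2 h).tsum_eq

lemma mgf_succ_geometricMeasure_le (hq : q ≠ 0) (htq : t < q) :
    mgf (fun n : ℕ => (n : ℝ) + 1) (geometricMeasure q) t ≤ q / (q - t) := by
  rw [mgf_succ_geometricMeasure hq (one_sub_mul_exp_lt_one htq)]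
  calc (q : ℝ) * exp t / (1 - (1 - q) * exp t) ≤ q * exp t / (exp t * (q - t)) :=
        div_le_div_of_nonneg_left (mul_nonneg q.2.1 (exp_pos t).le)
          (mul_pos (exp_pos t) (sub_pos.mpr htq)) (exp_mul_sub_le_one_sub_one_sub_mul_exp q t)
    _ = q / (q - t) := by rw [mul_comm (exp t), mul_div_mul_right _ _ (exp_pos t).ne']

variable {Ω : Type*} [MeasurableSpace Ω] {μ : Measure Ω} {Z : Ω → ℕ}

lemma hasLaw_geometricMeasure (hZ : Measurable Z) (hq : q ≠ 0)
    (hd : ∀ k, μ {ω | Z ω = k} = ENNReal.ofReal ((1 - q) ^ k * q)) :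
    HasLaw Z (geometricMeasure q) μ where
  aemeasurable := hZ.aemeasurable
  map_eq := Measure.ext_of_singleton fun k => by
    rw [Measure.map_apply hZ (measurableSet_singleton k), geometricMeasure_singleton hq]
    exact hd k

lemma HasLaw.integrable_exp_mul_succ_of_geometricMeasure (hZ : HasLaw Z (geometricMeasure q) μ)
    (hq : q ≠ 0) (htq : t < q) : Integrable (fun ω => exp (t * ((Z ω : ℝ) + 1))) μ := by
  have h := integrable_exp_mul_succ_geometricMeasure hq htq
  rw [← hZ.map_eq, integrable_map_measure (Measurable.of_discrete).aestronglyMeasurable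
    hZ.aemeasurable] at h
  exact h

lemma HasLaw.mgf_succ_le_of_geometricMeasure (hZ : HasLaw Z (geometricMeasure q) μ)
    (hq : q ≠ 0) (htq : t < q) : mgf (fun ω => (Z ω : ℝ) + 1) μ t ≤ q / (q - t) := by
  have h := mgf_map (X := fun n : ℕ => (n : ℝ) + 1) (t := t) hZ.aemeasurable
    Measurable.of_discrete.aestronglyMeasurable
  rw [hZ.map_eq] at h
  exact h ▸ mgf_succ_geometricMeasure_le hq htq

end Geometric

lemma measureReal_sum_ge_le_of_mgf_le {Ω ι : Type*} [MeasurableSpace Ω] {μ : Measure Ω}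
    [Fintype ι] {Y : ι → Ω → ℝ} (hindep : iIndepFun Y μ) (hmeas : ∀ i, Measurable (Y i))
    {t M : ℝ} (ht : 0 ≤ t) (hint : ∀ i, Integrable (fun ω => exp (t * Y i ω)) μ)
    (hmgf : ∀ i, mgf (Y i) μ t ≤ M) (ε : ℝ) :
    μ.real {ω | ε ≤ ∑ i, Y i ω} ≤ exp (-t * ε) * M ^ Fintype.card ι := by
  have := hindep.isProbabilityMeasure
  have hchernoff := measure_ge_le_exp_mul_mgf ε ht
    (hindep.integrable_exp_mul_sum hmeas (s := univ) fun i _ => hint i)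
  rw [hindep.mgf_sum hmeas] at hchernoff
  calc μ.real {ω | ε ≤ ∑ i, Y i ω} = μ.real {ω | ε ≤ (∑ i, Y i) ω} := by
        simp only [Finset.sum_apply]
    _ ≤ exp (-t * ε) * ∏ i, mgf (Y i) μ t := hchernoff
    _ ≤ exp (-t * ε) * M ^ Fintype.card ι := by
        gcongr
        calc ∏ i, mgf (Y i) μ t ≤ ∏ _i : ι, M :=
              prod_le_prod (fun i _ => mgf_nonneg) fun i _ => hmgf i
          _ = M ^ Fintype.card ι := by rw [prod_const, card_univ]

lemma measureReal_sum_succ_ge_le_of_hasLaw_geometricMeasure {Ω ι : Type*} [MeasurableSpace Ω]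
    {μ : Measure Ω} [Fintype ι] {q : unitInterval} (hq : q ≠ 0) {X : ι → Ω → ℕ}
    (hmeas : ∀ i, Measurable (X i)) (hindep : iIndepFun X μ)
    (hlaw : ∀ i, HasLaw (X i) (geometricMeasure q) μ) :
    μ.real {ω | 5 / (q : ℝ) * Fintype.card ι ≤ ∑ i, ((X i ω : ℝ) + 1)} ≤
      exp (-2 * Fintype.card ι) := by
  have hq0 : (0 : ℝ) < q := lt_of_le_of_ne q.2.1 (Ne.symm (unitInterval.coe_ne_zero.mpr hq))
  have hs : 3 / 5 * (q : ℝ) < q := by linarith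
  have hmgf i : mgf (fun ω => (X i ω : ℝ) + 1) μ (3 / 5 * q) ≤ 5 / 2 := by
    have h := (hlaw i).mgf_succ_le_of_geometricMeasure hq hs
    rwa [show (q : ℝ) / (q - 3 / 5 * q) = 5 / 2 by field_simp; ring] at h
  refine (measureReal_sum_ge_le_of_mgf_le
    (hindep.comp (fun _ n => (n : ℝ) + 1) fun _ => Measurable.of_discrete)
    (fun i => (measurable_from_nat.comp (hmeas i)).add_const 1) (by positivity)
    (fun i => (hlaw i).integrable_exp_mul_succ_of_geometricMeasure hq hs) hmgf _).trans ?_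
  rw [show -(3 / 5 * (q : ℝ)) * (5 / q * Fintype.card ι) = -3 * Fintype.card ι by field_simp]
  exact exp_neg_three_mul_mul_five_halves_pow_le _

end ProbabilityTheory

theorem stmt17_general {Ω : Type*} [MeasurableSpace Ω] (μ : Measure Ω)
    [IsProbabilityMeasure μ] (T : ℕ) (p : ℝ) (hp : 0 ≤ p)
    (X : Fin T → Ω → ℕ) (hmeas : ∀ t, Measurable (X t))
    (hindep : iIndepFun X μ)
    (hdist : ∀ t k, μ {ω | X t ω = k} =
      ENNReal.ofReal ((p / (1 + p)) ^ k * (1 / (1 + p)))) :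
    μ {ω | 5 * (1 + p) * (T : ℝ) ≤ ∑ t, ((X t ω : ℝ) + 1)} ≤
      ENNReal.ofReal (Real.exp (-2 * (T : ℝ))) := by
  have hp1 : 0 < 1 + p := by linarith
  let q : unitInterval := ⟨1 / (1 + p), by positivity, by rw [div_le_one hp1]; linarith⟩
  have hq : q ≠ 0 := unitInterval.coe_ne_zero.mp (by positivity)
  have hlaw t : HasLaw (X t) (geometricMeasure q) μ :=
    hasLaw_geometricMeasure (hmeas t) hq fun k => by
      rw [hdist, show (1 : ℝ) - 1 / (1 + p) = p / (1 + p) by field_simp; ring]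
  have htail := measureReal_sum_succ_ge_le_of_hasLaw_geometricMeasure hq hmeas hindep hlaw
  rw [Fintype.card_fin, show 5 / (q : ℝ) = 5 * (1 + p) by simp [q]] at htail
  rwa [ENNReal.le_ofReal_iff_toReal_le (measure_ne_top _ _) (exp_pos _).le]

/-- Multiplicative concentration for i.i.d. geometric random variables
(failure-count model, success probability `1/(1+p)`):
`Pr[ Σ_{t=1}^T (X_t + 1) ≥ 5(1+p)T ] ≤ exp(−2T)`. -/
theorem stmt17 {Ω : Type*} [MeasurableSpace Ω] (μ : Measure Ω)
    [IsProbabilityMeasure μ] (T : ℕ) (hT : 1 ≤ T) (p : ℝ) (hp : 0 ≤ p)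
    (X : Fin T → Ω → ℕ) (hmeas : ∀ t, Measurable (X t))
    (hindep : iIndepFun X μ)
    (hdist : ∀ t k, μ {ω | X t ω = k} =
      ENNReal.ofReal ((p / (1 + p)) ^ k * (1 / (1 + p)))) :
    μ {ω | 5 * (1 + p) * (T : ℝ) ≤ ∑ t, ((X t ω : ℝ) + 1)} ≤
      ENNReal.ofReal (Real.exp (-2 * (T : ℝ))) :=
  stmt17_general μ T p hp X hmeas hindep hdist
end
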